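/- For s ≥ 1, t ≥ max{s,3}, c ≥ 1, the recursively defined graph G_s (G_1 a path on c+1 vertices; G_s obtained from c disjoint copies of G_{s−1} plus one dominating vertex) contains no K_{s,t} minor. -/

import Mathlib

/-!
Induction on `s`. In a minor model of `K_{s,t}` in `G_s` the dominating vertex lies in at most one
branch set; deleting the corresponding vertex of `K_{s,t}` leaves `K_{s-1,t}` or `K_{s,t-1}`
modelled in the disjoint union of copies of `G_{s-1}`, and being connected it is modelled in a
single copy. In the base case the branch sets are intervals of a path, so no branch set can lie
between two adjacent ones; this excludes `K_{1,3}` and also `K_{2,2}`, which is what remains of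
`K_{2,3}` when the dominating vertex of `G_2` sits in a branch set of the larger side.
-/

/-- `H` is a minor of `G`: there are nonempty, pairwise disjoint, connected branch
sets in `G`, one for each vertex of `H`, with an edge of `G` between the branch
sets of any two adjacent vertices of `H`. -/
def SimpleGraph.IsMinorOf {α β : Type*} (H : SimpleGraph α) (G : SimpleGraph β) : Prop :=
  ∃ B : α → Set β,
    (∀ a, (B a).Nonempty) ∧
    (Pairwise fun a a' => Disjoint (B a) (B a')) ∧
    (∀ a, (G.induce (B a)).Connected) ∧
    (∀ a a', H.Adj a a' → ∃ u ∈ B a, ∃ w ∈ B a', G.Adj u w)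

/-- Add a dominating vertex (the vertex `none`) to a graph. -/
def SimpleGraph.addDominatingVertex {α : Type*} (H : SimpleGraph α) :
    SimpleGraph (Option α) where
  Adj u v :=
    match u, v with
    | none, none => False
    | none, some _ => True
    | some _, none => True
    | some a, some b => H.Adj a b
  symm := by
    constructor
    rintro (_ | a) (_ | b) h <;> simp_all
    exact h.symm
  loopless := by
    constructor
    rintro (_ | a) h <;> simp_all

/-- The disjoint union of `c` copies of a graph. -/
def SimpleGraph.copies {α : Type*} (c : ℕ) (H : SimpleGraph α) :
    SimpleGraph (Fin c × α) where
  Adj u v := u.1 = v.1 ∧ H.Adj u.2 v.2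
  symm := by constructor; rintro ⟨i, a⟩ ⟨j, b⟩ ⟨h1, h2⟩; exact ⟨h1.symm, h2.symm⟩
  loopless := by constructor; rintro ⟨i, a⟩ ⟨-, h⟩; exact H.irrefl h

/-- Vertex type of the recursively defined graph `G_{s+1}`. -/
def GsVertex (c : ℕ) : ℕ → Type
  | 0 => Fin (c + 1)
  | s + 1 => Option (Fin c × GsVertex c s)

/-- The recursively defined graph: `Gs c 0 = G_1` is a path on `c+1` vertices,
and `Gs c s = G_{s+1}` is obtained from `c` disjoint copies of `Gs c (s-1)` by
adding one dominating vertex. -/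
def Gs (c : ℕ) : (s : ℕ) → SimpleGraph (GsVertex c s)
  | 0 => SimpleGraph.pathGraph (c + 1)
  | s + 1 => (SimpleGraph.copies c (Gs c s)).addDominatingVertex

namespace SimpleGraph

variable {α α' β β' : Type*} {H : SimpleGraph α} {H' : SimpleGraph α'}
  {G : SimpleGraph β} {G' : SimpleGraph β'}

theorem Reachable.eq_of_forall_adj {V γ : Type*} {G : SimpleGraph V} {f : V → γ}
    (hf : ∀ u v, G.Adj u v → f u = f v) {u v : V} (h : G.Reachable u v) : f u = f v := by
  obtain ⟨p⟩ := h
  induction p with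
  | nil => rfl
  | cons hadj _ ih => exact (hf _ _ hadj).trans ih

theorem Embedding.connected_induce_preimage (f : G ↪g G') {s : Set β'} (hs : s ⊆ Set.range f)
    (h : (G'.induce s).Connected) : (G.induce (f ⁻¹' s)).Connected := by
  let e : G.induce (f ⁻¹' s) ≃g G'.induce s :=
    { Equiv.ofBijective ((Set.mapsTo_preimage f s).restrict f _ _)
        ⟨(Set.mapsTo_preimage f s).restrict_inj.mpr f.injective.injOn, fun ⟨_, hy⟩ => by
          obtain ⟨x, rfl⟩ := hs hy
          exact ⟨⟨x, hy⟩, rfl⟩⟩ with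
      map_rel_iff' := f.map_adj_iff }
  exact e.connected_iff.mpr h

structure MinorModel (H : SimpleGraph α) (G : SimpleGraph β) where
  branch : α → Set β
  nonempty : ∀ a, (branch a).Nonempty
  pairwise_disjoint : Pairwise fun a a' => Disjoint (branch a) (branch a')
  connected : ∀ a, (G.induce (branch a)).Connected
  exists_adj : ∀ a a', H.Adj a a' → ∃ u ∈ branch a, ∃ w ∈ branch a', G.Adj u w

theorem isMinorOf_iff_nonempty_minorModel : H.IsMinorOf G ↔ Nonempty (H.MinorModel G) :=
  ⟨fun ⟨B, h₁, h₂, h₃, h₄⟩ => ⟨⟨B, h₁, h₂, h₃, h₄⟩⟩,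
    fun ⟨M⟩ => ⟨M.branch, M.nonempty, M.pairwise_disjoint, M.connected, M.exists_adj⟩⟩

namespace MinorModel

theorem isMinorOf (M : H.MinorModel G) : H.IsMinorOf G :=
  isMinorOf_iff_nonempty_minorModel.mpr ⟨M⟩

def copyComp (M : H.MinorModel G) (f : Copy H' H) : H'.MinorModel G where
  branch := M.branch ∘ f
  nonempty _ := M.nonempty _
  pairwise_disjoint _ _ h := M.pairwise_disjoint (f.injective.ne h)
  connected _ := M.connected _
  exists_adj _ _ h := M.exists_adj _ _ (f.toHom.map_adj h)

def comap (M : H.MinorModel G') (f : G ↪g G') (hM : ∀ a, M.branch a ⊆ Set.range f) :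
    H.MinorModel G where
  branch a := f ⁻¹' M.branch a
  nonempty a := by
    obtain ⟨_, hv⟩ := M.nonempty a
    obtain ⟨x, rfl⟩ := hM a hv
    exact ⟨x, hv⟩
  pairwise_disjoint _ _ h := (M.pairwise_disjoint h).preimage f
  connected a := f.connected_induce_preimage (hM a) (M.connected a)
  exists_adj a a' h := by
    obtain ⟨u, hu, w, hw, huw⟩ := M.exists_adj a a' h
    obtain ⟨x, rfl⟩ := hM a hu
    obtain ⟨y, rfl⟩ := hM a' hw
    exact ⟨x, hu, y, hw, f.map_adj_iff.mp huw⟩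

end MinorModel

theorem IsMinorOf.of_isContained (h : H.IsMinorOf G) (h' : H' ⊑ H) : H'.IsMinorOf G := by
  obtain ⟨M⟩ := isMinorOf_iff_nonempty_minorModel.mp h
  obtain ⟨f⟩ := h'
  exact (M.copyComp f).isMinorOf

def embeddingAddDominatingVertex (G : SimpleGraph β) : G ↪g G.addDominatingVertex :=
  ⟨⟨some, Option.some_injective _⟩, Iff.rfl⟩

def embeddingCopies (G : SimpleGraph β) {c : ℕ} (i : Fin c) : G ↪g G.copies c :=
  ⟨⟨Prod.mk i, Prod.mk_right_injective i⟩, ⟨And.right, fun h => ⟨rfl, h⟩⟩⟩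

theorem IsMinorOf.exists_induce_compl_singleton_of_addDominatingVertex [Nonempty α]
    (h : H.IsMinorOf G.addDominatingVertex) : ∃ x, (H.induce {x}ᶜ).IsMinorOf G := by
  obtain ⟨M⟩ := isMinorOf_iff_nonempty_minorModel.mp h
  have of_avoid : ∀ x, (∀ a ≠ x, none ∉ M.branch a) → (H.induce {x}ᶜ).IsMinorOf G :=
    fun x hx => ((M.copyComp (Copy.induce H {x}ᶜ)).comap (embeddingAddDominatingVertex G)
      fun a v hv => by
        cases v with
        | none => exact absurd hv (hx a a.2)
        | some y => exact ⟨y, rfl⟩).isMinorOf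
  by_cases hnone : ∃ x, none ∈ M.branch x
  · obtain ⟨x, hx⟩ := hnone
    exact ⟨x, of_avoid x fun a ha hna => Set.disjoint_left.mp (M.pairwise_disjoint ha) hna hx⟩
  · exact ⟨Classical.arbitrary α, of_avoid _ fun a _ => not_exists.mp hnone a⟩

theorem IsMinorOf.of_copies {c : ℕ} (hH : H.Connected) (h : H.IsMinorOf (G.copies c)) :
    H.IsMinorOf G := by
  obtain ⟨M⟩ := isMinorOf_iff_nonempty_minorModel.mp h
  let idx a : Fin c := (M.nonempty a).some.1
  have mem_copy : ∀ a, ∀ v ∈ M.branch a, v.1 = idx a := fun a v hv =>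
    ((M.connected a).preconnected ⟨v, hv⟩ ⟨_, (M.nonempty a).some_mem⟩).eq_of_forall_adj
      (f := fun v => v.1.1) fun _ _ huv => by exact huv.1
  have idx_eq_of_adj : ∀ a a', H.Adj a a' → idx a = idx a' := fun a a' haa' => by
    obtain ⟨u, hu, w, hw, huw⟩ := M.exists_adj a a' haa'
    rw [← mem_copy a u hu, ← mem_copy a' w hw]
    exact huw.1
  obtain ⟨a₀⟩ := hH.nonempty
  refine (M.comap (embeddingCopies G (idx a₀)) fun a v hv => ⟨v.2, ?_⟩).isMinorOf
  rw [(hH.preconnected a₀ a).eq_of_forall_adj idx_eq_of_adj, ← mem_copy a v hv]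
  rfl

theorem ordConnected_of_preconnected_induce_pathGraph {n : ℕ} {s : Set (Fin n)}
    (h : ((pathGraph n).induce s).Preconnected) : s.OrdConnected := by
  refine ⟨fun x hx y hy z hz => by_contra fun hzs => ?_⟩
  have hne : ∀ v ∈ s, v ≠ z := fun v hv e => hzs (e ▸ hv)
  -- lying left of the missing vertex `z` is invariant along edges avoiding `z`
  have hside := (h ⟨x, hx⟩ ⟨y, hy⟩).eq_of_forall_adj (f := fun v : s => (v : Fin n) < z)
    fun u v huv => by
      have hu := hne u u.2
      have hv := hne v v.2
      rw [induce_adj, pathGraph_adj] at huv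
      simp only [eq_iff_iff]
      omega
  have hxz' := hne x hx
  obtain ⟨hxz, hzy⟩ := hz
  simp only [eq_iff_iff] at hside
  omega

theorem MinorModel.notMem_uIcc_of_pathGraph {n : ℕ} (M : H.MinorModel (pathGraph n))
    {p : α → Fin n} (hp : ∀ a, p a ∈ M.branch a) {a a' b : α} (h : H.Adj a a')
    (hba : b ≠ a) (hba' : b ≠ a') : p b ∉ Set.uIcc (p a) (p a') := by
  intro hb
  obtain ⟨u, hu, w, hw, huw⟩ := M.exists_adj a a' h
  have hunion := connected_induce_union (M.connected a).preconnected
    (M.connected a').preconnected hu hw huw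
  rcases (ordConnected_of_preconnected_induce_pathGraph hunion.preconnected).uIcc_subset
    (Or.inl (hp a)) (Or.inr (hp a')) hb with hb | hb
  · exact Set.disjoint_left.mp (M.pairwise_disjoint hba) (hp b) hb
  · exact Set.disjoint_left.mp (M.pairwise_disjoint hba') (hp b) hb

open Sum in
theorem not_completeBipartiteGraph_one_three_isMinorOf_pathGraph (n : ℕ) :
    ¬ (completeBipartiteGraph (Fin 1) (Fin 3)).IsMinorOf (pathGraph n) := by
  intro h
  obtain ⟨M⟩ := isMinorOf_iff_nonempty_minorModel.mp h
  choose p hp using M.nonempty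
  have key a a' b := M.notMem_uIcc_of_pathGraph hp (a := a) (a' := a') (b := b)
  have h01 := key (inl 0) (inr 0) (inr 1) (by simp) (by decide) (by decide)
  have h02 := key (inl 0) (inr 0) (inr 2) (by simp) (by decide) (by decide)
  have h10 := key (inl 0) (inr 1) (inr 0) (by simp) (by decide) (by decide)
  have h12 := key (inl 0) (inr 1) (inr 2) (by simp) (by decide) (by decide)
  have h20 := key (inl 0) (inr 2) (inr 0) (by simp) (by decide) (by decide)
  have h21 := key (inl 0) (inr 2) (inr 1) (by simp) (by decide) (by decide)
  simp only [Set.mem_uIcc] at h01 h02 h10 h12 h20 h21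
  omega

open Sum in
theorem not_completeBipartiteGraph_two_two_isMinorOf_pathGraph (n : ℕ) :
    ¬ (completeBipartiteGraph (Fin 2) (Fin 2)).IsMinorOf (pathGraph n) := by
  intro h
  obtain ⟨M⟩ := isMinorOf_iff_nonempty_minorModel.mp h
  choose p hp using M.nonempty
  have key a a' b := M.notMem_uIcc_of_pathGraph hp (a := a) (a' := a') (b := b)
  have h1 := key (inl 0) (inr 0) (inl 1) (by simp) (by decide) (by decide)
  have h2 := key (inl 0) (inr 0) (inr 1) (by simp) (by decide) (by decide)
  have h3 := key (inl 0) (inr 1) (inl 1) (by simp) (by decide) (by decide)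
  have h4 := key (inl 0) (inr 1) (inr 0) (by simp) (by decide) (by decide)
  have h5 := key (inl 1) (inr 0) (inl 0) (by simp) (by decide) (by decide)
  have h6 := key (inl 1) (inr 0) (inr 1) (by simp) (by decide) (by decide)
  have h7 := key (inl 1) (inr 1) (inl 0) (by simp) (by decide) (by decide)
  have h8 := key (inl 1) (inr 1) (inr 0) (by simp) (by decide) (by decide)
  simp only [Set.mem_uIcc] at h1 h2 h3 h4 h5 h6 h7 h8
  omega

def Copy.codRestrict {A : SimpleGraph α} {B : SimpleGraph β} (f : Copy A B) {s : Set β}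
    (hs : ∀ a, f a ∈ s) : Copy A (B.induce s) :=
  ⟨⟨fun a => ⟨f a, hs a⟩, f.toHom.map_adj⟩,
    fun _ _ h => f.injective (congrArg Subtype.val h)⟩

def Copy.completeBipartiteGraphOfEmbedding {V₁ V₂ W₁ W₂ : Type*} (f : V₁ ↪ V₂)
    (g : W₁ ↪ W₂) :
    Copy (_root_.completeBipartiteGraph V₁ W₁) (_root_.completeBipartiteGraph V₂ W₂) :=
  ⟨⟨Sum.map f g, by rintro (_ | _) (_ | _) <;> simp⟩, f.injective.sumMap g.injective⟩

theorem completeBipartiteGraph_isContained_swap (V W : Type*) :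
    completeBipartiteGraph V W ⊑ completeBipartiteGraph W V :=
  ⟨⟨⟨Sum.swap, by rintro (_ | _) (_ | _) <;> simp⟩, (Equiv.sumComm V W).injective⟩⟩

theorem completeBipartiteGraph_fin_isContained {a b a' b' : ℕ} (ha : a' ≤ a) (hb : b' ≤ b) :
    completeBipartiteGraph (Fin a') (Fin b') ⊑ completeBipartiteGraph (Fin a) (Fin b) :=
  ⟨Copy.completeBipartiteGraphOfEmbedding (Fin.castLEEmb ha) (Fin.castLEEmb hb)⟩

theorem completeBipartiteGraph_isContained_induce_compl_inl {a b : ℕ} (v : Fin (a + 1)) :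
    completeBipartiteGraph (Fin a) (Fin b) ⊑
      (completeBipartiteGraph (Fin (a + 1)) (Fin b)).induce {Sum.inl v}ᶜ :=
  ⟨(Copy.completeBipartiteGraphOfEmbedding v.succAboveEmb (.refl (Fin b))).codRestrict
    (s := {Sum.inl v}ᶜ)
    (by rintro (x | y) <;> simp [Copy.completeBipartiteGraphOfEmbedding, Fin.succAbove_ne])⟩

theorem completeBipartiteGraph_isContained_induce_compl_inr {a b : ℕ} (w : Fin (b + 1)) :
    completeBipartiteGraph (Fin a) (Fin b) ⊑
      (completeBipartiteGraph (Fin a) (Fin (b + 1))).induce {Sum.inr w}ᶜ :=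
  ⟨(Copy.completeBipartiteGraphOfEmbedding (.refl (Fin a)) w.succAboveEmb).codRestrict
    (s := {Sum.inr w}ᶜ)
    (by rintro (x | y) <;> simp [Copy.completeBipartiteGraphOfEmbedding, Fin.succAbove_ne])⟩

theorem completeBipartiteGraph_connected (V W : Type*) [Nonempty V] [Nonempty W] :
    (completeBipartiteGraph V W).Connected := by
  obtain ⟨v⟩ := ‹Nonempty V›
  obtain ⟨w⟩ := ‹Nonempty W›
  have hvw : (completeBipartiteGraph V W).Adj (Sum.inl v) (Sum.inr w) := by simp
  refine (connected_iff_exists_forall_reachable _).mpr ⟨Sum.inl v, ?_⟩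
  rintro (v' | w')
  · exact hvw.reachable.trans (Adj.reachable (by simp))
  · exact Adj.reachable (by simp)

end SimpleGraph

open SimpleGraph

theorem not_completeBipartiteGraph_isMinorOf_Gs (c : ℕ) {k t : ℕ} (ht : max (k + 1) 3 ≤ t) :
    ¬ (completeBipartiteGraph (Fin (k + 1)) (Fin t)).IsMinorOf (Gs c k) := by
  induction k generalizing t with
  | zero =>
    exact fun h => not_completeBipartiteGraph_one_three_isMinorOf_pathGraph _
      (h.of_isContained (completeBipartiteGraph_fin_isContained le_rfl (by omega)))
  | succ k ih =>
    intro h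
    obtain ⟨t, rfl⟩ : ∃ t', t = t' + 1 := ⟨t - 1, by omega⟩
    have : Nonempty (Fin t) := ⟨⟨0, by omega⟩⟩
    obtain ⟨x, hx⟩ := h.exists_induce_compl_singleton_of_addDominatingVertex
    rcases x with v | w
    · exact ih (by omega) ((hx.of_isContained
        (completeBipartiteGraph_isContained_induce_compl_inl v)).of_copies
        (completeBipartiteGraph_connected _ _))
    · have h' : (completeBipartiteGraph (Fin (k + 2)) (Fin t)).IsMinorOf (Gs c k) :=
        (hx.of_isContained (completeBipartiteGraph_isContained_induce_compl_inr w)).of_copies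
          (completeBipartiteGraph_connected _ _)
      rcases (by omega : 3 ≤ t ∨ (k = 0 ∧ t = 2) ∨ (k = 1 ∧ t = 2))
        with h3 | ⟨rfl, rfl⟩ | ⟨rfl, rfl⟩
      · exact ih (by omega)
          (h'.of_isContained (completeBipartiteGraph_fin_isContained (by omega) le_rfl))
      · exact not_completeBipartiteGraph_two_two_isMinorOf_pathGraph _ h'
      · exact ih le_rfl (h'.of_isContained (completeBipartiteGraph_isContained_swap _ _))

theorem Gs_no_Kst_minor_general (s t c : ℕ) (hs : 1 ≤ s) (ht : max s 3 ≤ t) :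
    ¬ (completeBipartiteGraph (Fin s) (Fin t)).IsMinorOf (Gs c (s - 1)) := by
  obtain ⟨k, rfl⟩ : ∃ k, s = k + 1 := ⟨s - 1, by omega⟩
  exact not_completeBipartiteGraph_isMinorOf_Gs c ht

/-- For `s ≥ 1`, `t ≥ max{s,3}`, `c ≥ 1`, the recursively defined
graph `G_s` contains no `K_{s,t}` minor. -/
theorem Gs_no_Kst_minor (s t c : ℕ) (hs : 1 ≤ s) (ht : max s 3 ≤ t) (hc : 1 ≤ c) :
    ¬ (completeBipartiteGraph (Fin s) (Fin t)).IsMinorOf (Gs c (s - 1)) :=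
  Gs_no_Kst_minor_general s t c hs ht
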